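/- arXiv:1605.03864 — 2 statements merged into one kernel-verified Lean document; each statement's English description precedes it below -/
import Mathlib

section
/- Let f : (0,∞) → ℝ be a nonnegative function in L²(0,∞). Then lim_{t→∞} (1/t) ∫₀ᵗ ∫₀ˢ (s-τ)^{-1/2} f(τ) dτ ds = 0. -/
/-!
By Fubini, `∫₀ᵗ ∫₀ˢ (s - τ)^(-1/2) f(τ) dτ ds = ∫₀ᵗ 2 √(t - τ) f(τ) dτ`, which is at most
`2 √t ∫₀ᵗ |f|` in absolute value. For `f ∈ L²(0, ∞)` one has `∫₀ᵗ |f| = o(√t)`: split at a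
large `A`; the part over `(0, A]` is a constant, and by Cauchy–Schwarz the part over `(A, t]` is at
most `√t ‖f‖_{L²(A, ∞)}`, which is a small multiple of `√t`.
-/

open MeasureTheory Filter Set Topology Function
open scoped ENNReal

theorem lintegral_Icc_sub_rpow_neg_half {τ t : ℝ} (h : τ ≤ t) :
    ∫⁻ s in Icc τ t, ENNReal.ofReal ((s - τ) ^ (-(1/2) : ℝ)) = ENNReal.ofReal (2 * √(t - τ)) := by
  have hint : IntegrableOn (fun s => (s - τ) ^ (-(1/2) : ℝ)) (Ioc τ t) := by
    have h1 := (intervalIntegral.intervalIntegrable_rpow' (a := 0) (b := t - τ)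
      (r := -(1/2)) (by norm_num)).comp_sub_right τ
    simp only [zero_add, sub_add_cancel] at h1
    rwa [intervalIntegrable_iff_integrableOn_Ioc_of_le h] at h1
  rw [setLIntegral_congr Ioc_ae_eq_Icc.symm, ← ofReal_integral_eq_lintegral_ofReal hint
    ((ae_restrict_mem measurableSet_Ioc).mono fun s hs => Real.rpow_nonneg (by linarith [hs.1]) _),
    ← intervalIntegral.integral_of_le h, intervalIntegral.integral_comp_sub_right
      (fun x => x ^ (-(1/2) : ℝ)) τ, sub_self, integral_rpow (Or.inl (by norm_num)),
    Real.zero_rpow (by norm_num), Real.sqrt_eq_rpow]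
  congr 1
  norm_num
  ring

theorem lintegral_Ioc_lintegral_Ioc_swap (K : ℝ → ℝ → ℝ≥0∞) (hK : Measurable (uncurry K))
    (a t : ℝ) :
    ∫⁻ s in Ioc a t, ∫⁻ τ in Ioc a s, K s τ = ∫⁻ τ in Ioc a t, ∫⁻ s in Icc τ t, K s τ := by
  calc ∫⁻ s in Ioc a t, ∫⁻ τ in Ioc a s, K s τ
      = ∫⁻ s in Ioc a t, ∫⁻ τ in Ioc a t, (Iic s).indicator (K s) τ := by
        refine setLIntegral_congr_fun measurableSet_Ioc fun s hs => ?_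
        rw [lintegral_indicator measurableSet_Iic, Measure.restrict_restrict measurableSet_Iic,
          Iic_inter_Ioc_of_le hs.2]
    _ = ∫⁻ τ in Ioc a t, ∫⁻ s in Ioc a t, (Ici τ).indicator (K · τ) s :=
        lintegral_lintegral_swap
          (hK.indicator (measurableSet_le measurable_snd measurable_fst)).aemeasurable
    _ = ∫⁻ τ in Ioc a t, ∫⁻ s in Icc τ t, K s τ := by
        refine setLIntegral_congr_fun measurableSet_Ioc fun τ hτ => ?_
        have hsection : Ici τ ∩ Ioc a t = Icc τ t := by
          ext s
          exact ⟨fun ⟨hτs, _, hst⟩ => ⟨hτs, hst⟩, fun ⟨hτs, hst⟩ => ⟨hτs, hτ.1.trans_le hτs, hst⟩⟩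
        rw [lintegral_indicator measurableSet_Ici, Measure.restrict_restrict measurableSet_Ici,
          hsection]

theorem lintegral_Ioc_lintegral_Ioc_rpow_neg_half_mul_le (g : ℝ → ℝ≥0∞) (hg : Measurable g)
    (a t : ℝ) :
    ∫⁻ s in Ioc a t, ∫⁻ τ in Ioc a s, ENNReal.ofReal ((s - τ) ^ (-(1/2) : ℝ)) * g τ ≤
      ENNReal.ofReal (2 * √(t - a)) * ∫⁻ τ in Ioc a t, g τ := by
  rw [lintegral_Ioc_lintegral_Ioc_swap _ (by fun_prop), ← lintegral_const_mul _ hg]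
  refine setLIntegral_mono (hg.const_mul _) fun τ hτ => ?_
  rw [lintegral_mul_const _ (by fun_prop), lintegral_Icc_sub_rpow_neg_half hτ.2]
  gcongr
  linarith [hτ.1]

theorem abs_integral_Ioc_integral_Ioc_rpow_neg_half_mul_le {f : ℝ → ℝ} (hf : Measurable f)
    {a t : ℝ} (hint : IntegrableOn f (Ioc a t)) :
    |∫ s in Ioc a t, ∫ τ in Ioc a s, (s - τ) ^ (-(1/2) : ℝ) * f τ| ≤
      2 * √(t - a) * ∫ τ in Ioc a t, |f τ| := by
  rw [← ENNReal.ofReal_le_ofReal_iff (by positivity), ← Real.enorm_eq_ofReal_abs,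
    ENNReal.ofReal_mul (by positivity)]
  calc ‖∫ s in Ioc a t, ∫ τ in Ioc a s, (s - τ) ^ (-(1/2) : ℝ) * f τ‖ₑ
      ≤ ∫⁻ s in Ioc a t, ∫⁻ τ in Ioc a s, ‖(s - τ) ^ (-(1/2) : ℝ)‖ₑ * ‖f τ‖ₑ :=
        (enorm_integral_le_lintegral_enorm _).trans <| lintegral_mono fun s =>
          (enorm_integral_le_lintegral_enorm _).trans_eq (by simp only [enorm_mul])
    _ = ∫⁻ s in Ioc a t, ∫⁻ τ in Ioc a s, ENNReal.ofReal ((s - τ) ^ (-(1/2) : ℝ)) * ‖f τ‖ₑ := by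
        refine lintegral_congr fun s => setLIntegral_congr_fun measurableSet_Ioc fun τ hτ => ?_
        rw [Real.enorm_of_nonneg (Real.rpow_nonneg (sub_nonneg.2 hτ.2) _)]
    _ ≤ ENNReal.ofReal (2 * √(t - a)) * ∫⁻ τ in Ioc a t, ‖f τ‖ₑ :=
        lintegral_Ioc_lintegral_Ioc_rpow_neg_half_mul_le _ hf.enorm a t
    _ = ENNReal.ofReal (2 * √(t - a)) * ENNReal.ofReal (∫ τ in Ioc a t, |f τ|) := by
        rw [← ofReal_integral_norm_eq_lintegral_enorm hint]
        rfl

theorem integral_abs_le_sqrt_mul_sqrt {α : Type*} [MeasurableSpace α] {μ : Measure α}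
    [IsFiniteMeasure μ] {f : α → ℝ} (hf : MemLp f 2 μ) :
    ∫ a, |f a| ∂μ ≤ √(μ.real univ) * √(∫ a, f a ^ 2 ∂μ) := by
  have h := integral_mul_norm_le_Lp_mul_Lq (μ := μ) Real.HolderConjugate.two_two
    (f := f) (g := fun _ => (1 : ℝ)) (by simpa using hf) (memLp_const 1)
  simpa [Real.sqrt_eq_rpow, mul_comm] using h

theorem MeasureTheory.MemLp.integrableOn_Ioc {f : ℝ → ℝ} {a b c : ℝ}
    (hf : MemLp f 2 (volume.restrict (Ioi a))) (hab : a ≤ b) : IntegrableOn f (Ioc b c) :=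
  (hf.mono_measure (Measure.restrict_mono (fun _ hx => hab.trans_lt hx.1) le_rfl)).integrable
    one_le_two

theorem integral_Ioc_abs_le_add_sqrt_mul {f : ℝ → ℝ} (hf : MemLp f 2 (volume.restrict (Ioi 0)))
    {A t : ℝ} (hA : 0 ≤ A) (hAt : A ≤ t) :
    ∫ τ in Ioc 0 t, |f τ| ≤ (∫ τ in Ioc 0 A, |f τ|) + √t * √(∫ τ in Ioi A, f τ ^ 2) := by
  have hL2 : ∀ {s}, s ⊆ Ioi (0 : ℝ) → MemLp f 2 (volume.restrict s) := fun hs =>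
    hf.mono_measure (Measure.restrict_mono hs le_rfl)
  rw [← Ioc_union_Ioc_eq_Ioc hA hAt, setIntegral_union (Ioc_disjoint_Ioc_of_le le_rfl)
    measurableSet_Ioc (hf.integrableOn_Ioc le_rfl).abs (hf.integrableOn_Ioc hA).abs]
  gcongr
  calc ∫ τ in Ioc A t, |f τ|
      ≤ √(volume.real (Ioc A t)) * √(∫ τ in Ioc A t, f τ ^ 2) := by
        simpa using integral_abs_le_sqrt_mul_sqrt (hL2 fun x (hx : x ∈ Ioc A t) => hA.trans_lt hx.1)
    _ ≤ √t * √(∫ τ in Ioi A, f τ ^ 2) := by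
        gcongr
        · rw [Real.volume_real_Ioc_of_le hAt]
          linarith
        · exact ae_of_all _ fun _ => sq_nonneg _
        · exact (hL2 fun x (hx : x ∈ Ioi A) => hA.trans_lt hx).integrable_sq
        · exact Ioc_subset_Ioi_self

theorem tendsto_integral_Ioc_abs_div_sqrt {f : ℝ → ℝ}
    (hf : MemLp f 2 (volume.restrict (Ioi 0))) :
    Tendsto (fun t => (∫ τ in Ioc 0 t, |f τ|) / √t) atTop (𝓝 0) := by
  refine tendsto_order.2 ⟨fun a ha => Eventually.of_forall fun t =>
    ha.trans_le (div_nonneg (integral_nonneg fun _ => abs_nonneg _) (Real.sqrt_nonneg t)),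
    fun ε hε => ?_⟩
  have htail : Tendsto (fun A => ∫ τ in Ioi A, f τ ^ 2) atTop (𝓝 0) :=
    tendsto_integral_Ioi_zero tendsto_id
  obtain ⟨A, hA, hAε⟩ := ((eventually_ge_atTop 0).and
    (htail.eventually (gt_mem_nhds (pow_pos (half_pos hε) 2)))).exists
  have hhead : Tendsto (fun t => (∫ τ in Ioc 0 A, |f τ|) / √t) atTop (𝓝 0) :=
    tendsto_const_nhds.div_atTop Real.tendsto_sqrt_atTop
  filter_upwards [eventually_ge_atTop A, eventually_gt_atTop 0,
    hhead.eventually (gt_mem_nhds (half_pos hε))] with t hAt ht hheadt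
  have hsqrt : 0 < √t := Real.sqrt_pos.2 ht
  have hε' : √t * √(∫ τ in Ioi A, f τ ^ 2) < √t * (ε / 2) :=
    mul_lt_mul_of_pos_left ((Real.sqrt_lt' (half_pos hε)).2 hAε) hsqrt
  rw [div_lt_iff₀ hsqrt] at hheadt ⊢
  calc ∫ τ in Ioc 0 t, |f τ|
      ≤ (∫ τ in Ioc 0 A, |f τ|) + √t * √(∫ τ in Ioi A, f τ ^ 2) :=
        integral_Ioc_abs_le_add_sqrt_mul hf hA hAt
    _ < ε / 2 * √t + √t * (ε / 2) := add_lt_add hheadt hε'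
    _ = ε * √t := by ring

theorem stmt0_general (f : ℝ → ℝ) (hmeas : Measurable f)
    (hL2 : IntegrableOn (fun τ => (f τ) ^ 2) (Set.Ioi (0:ℝ))) :
    Tendsto (fun t : ℝ =>
        (1 / t) * ∫ s in Set.Ioc (0:ℝ) t,
          ∫ τ in Set.Ioc (0:ℝ) s, (s - τ) ^ (-(1/2) : ℝ) * f τ)
      atTop (nhds 0) := by
  have hf : MemLp f 2 (volume.restrict (Ioi 0)) :=
    (memLp_two_iff_integrable_sq hmeas.aestronglyMeasurable).2 hL2
  refine squeeze_zero_norm' ?_ (by simpa using (tendsto_integral_Ioc_abs_div_sqrt hf).const_mul 2)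
  filter_upwards [eventually_gt_atTop 0] with t ht
  calc ‖1 / t * ∫ s in Ioc 0 t, ∫ τ in Ioc 0 s, (s - τ) ^ (-(1/2) : ℝ) * f τ‖
      = 1 / t * |∫ s in Ioc 0 t, ∫ τ in Ioc 0 s, (s - τ) ^ (-(1/2) : ℝ) * f τ| := by
        rw [Real.norm_eq_abs, abs_mul, abs_of_pos (one_div_pos.2 ht)]
    _ ≤ 1 / t * (2 * √(t - 0) * ∫ τ in Ioc 0 t, |f τ|) := by
        gcongr
        exact abs_integral_Ioc_integral_Ioc_rpow_neg_half_mul_le hmeas (hf.integrableOn_Ioc le_rfl)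
    _ = 2 * ((∫ τ in Ioc 0 t, |f τ|) / √t) := by
        rw [sub_zero]
        field_simp
        rw [Real.sq_sqrt ht.le]

/-- Lemma 6 (limit-zero): for a nonnegative function `f ∈ L²(0,∞)`,
`(1/t) ∫₀ᵗ ∫₀ˢ (s-τ)^{-1/2} f(τ) dτ ds → 0` as `t → ∞`. -/
theorem stmt0 (f : ℝ → ℝ) (hmeas : Measurable f)
    (hpos : ∀ τ ∈ Set.Ioi (0:ℝ), 0 ≤ f τ)
    (hL2 : IntegrableOn (fun τ => (f τ) ^ 2) (Set.Ioi (0:ℝ))) :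
    Tendsto (fun t : ℝ =>
        (1 / t) * ∫ s in Set.Ioc (0:ℝ) t,
          ∫ τ in Set.Ioc (0:ℝ) s, (s - τ) ^ (-(1/2) : ℝ) * f τ)
      atTop (nhds 0) :=
  stmt0_general f hmeas hL2
end

section
/- For α > 0, let ψ_α(r,θ) = r^{cos α} cos(θ - sin α · log r), u_α = ∇^⊥ψ_α, and let ū(x) = x^⊥/|x|² (i.e., e_θ/r). Then (u_α·∇u_α)·ū = (sin 2α / 2) r^{-4+2cos α} pointwise, and consequently ∫_{ℝ²\B(0,1)} (u_α·∇u_α)·ū = π sin 2α / (2 - 2cos α). -/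
open MeasureTheory Filter Set

noncomputable section

abbrev E2 : Type := EuclideanSpace ℝ (Fin 2)

/-- The polar angle `θ(x)` of a point `x ∈ ℝ²`. -/
def polarArg (x : E2) : ℝ := Complex.arg ((x 0 : ℂ) + (x 1 : ℂ) * Complex.I)

/-- The stream function `ψ_α(r,θ) = r^{cos α} cos(θ - sin α · log r)`. -/
def psiA (α : ℝ) (x : E2) : ℝ :=
  ‖x‖ ^ Real.cos α * Real.cos (polarArg x - Real.sin α * Real.log ‖x‖)

/-- `u_α = ∇^⊥ ψ_α = (-∂_y ψ_α, ∂_x ψ_α)`. -/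
def uA (α : ℝ) (x : E2) : E2 :=
  (WithLp.equiv 2 (Fin 2 → ℝ)).symm
    ![-(fderiv ℝ (psiA α) x (EuclideanSpace.single 1 1)),
      fderiv ℝ (psiA α) x (EuclideanSpace.single 0 1)]

/-- `x^⊥ = (-x₂, x₁)`. -/
def perp (x : E2) : E2 := (WithLp.equiv 2 (Fin 2 → ℝ)).symm ![-(x 1), x 0]

/-- The pure rotating flow `ū = e_θ/r = x^⊥/|x|²`. -/
def rotFlow (x : E2) : E2 := (‖x‖ ^ 2)⁻¹ • perp x

/-! Identify `ℝ²` with `ℂ`. Then `ψ_α = Re (z |z|^{2q})` with `2q = e^{-iα} - 1`, and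
`u_α = i (conj a + b)` where `a`, `b` are the Wirtinger derivatives `∂_z`, `∂_z̄` of `z |z|^{2q}`.
The Wirtinger calculus makes the acceleration `W = ∂_z U · U + ∂_z̄ U · conj U` of the complex
velocity `U` a rational expression in `z, z̄, f, f̄` (`f = z |z|^{2q}`), and pairing with
`ū = i z / |z|²` picks out `Im (W z̄) / |z|²`. The terms `f²` and `f̄²` of `W z̄ |z|²` come in
conjugate pairs, so only the `|f|²` term has an imaginary part, with coefficient
`(1 + 2 Re q)(-2 Im q) = cos α sin α`. The integral is then a radial integral of
`r^{2 cos α - 4}`. -/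

open Complex ComplexConjugate

def wirtingerCLM (a b : ℂ) : ℂ →L[ℝ] ℂ := a • 1 + b • (conjCLE : ℂ →L[ℝ] ℂ)

@[simp]
lemma wirtingerCLM_apply (a b v : ℂ) : wirtingerCLM a b v = a * v + b * conj v := by
  simp [wirtingerCLM]

/-- `a = ∂F/∂z` and `b = ∂F/∂z̄` at `z`. -/
def HasWirtingerDerivAt (F : ℂ → ℂ) (a b z : ℂ) : Prop :=
  HasFDerivAt F (wirtingerCLM a b) z

namespace HasWirtingerDerivAt

variable {F G : ℂ → ℂ} {a b c d z : ℂ}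

lemma fderiv_apply (h : HasWirtingerDerivAt F a b z) (v : ℂ) :
    fderiv ℝ F z v = a * v + b * conj v := by
  rw [h.fderiv, wirtingerCLM_apply]

lemma add (hF : HasWirtingerDerivAt F a b z) (hG : HasWirtingerDerivAt G c d z) :
    HasWirtingerDerivAt (fun w => F w + G w) (a + c) (b + d) z :=
  (HasFDerivAt.add hF hG).congr_fderiv <| by
    ext1 v; simp only [add_apply, wirtingerCLM_apply]; ring

lemma mul (hF : HasWirtingerDerivAt F a b z) (hG : HasWirtingerDerivAt G c d z) :
    HasWirtingerDerivAt (fun w => F w * G w) (F z * c + G z * a) (F z * d + G z * b) z :=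
  (HasFDerivAt.mul hF hG).congr_fderiv <| by
    ext1 v
    simp only [add_apply, smul_apply, wirtingerCLM_apply, smul_eq_mul]
    ring

lemma const_mul (hF : HasWirtingerDerivAt F a b z) (c : ℂ) :
    HasWirtingerDerivAt (fun w => c * F w) (c * a) (c * b) z :=
  (HasFDerivAt.const_mul hF c).congr_fderiv <| by
    ext1 v; simp only [smul_apply, wirtingerCLM_apply, smul_eq_mul]; ring

lemma conjugate (hF : HasWirtingerDerivAt F a b z) :
    HasWirtingerDerivAt (fun w => conj (F w)) (conj b) (conj a) z :=
  ((conjCLE : ℂ →L[ℝ] ℂ).hasFDerivAt.comp z hF).congr_fderiv <| by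
    ext1 v
    simp only [ContinuousLinearMap.comp_apply, ContinuousLinearEquiv.coe_coe,
      ContinuousAlgEquiv.coeCLE_apply, conjCAE_apply, wirtingerCLM_apply, map_add, map_mul,
      conj_conj]
    ring

lemma inv (hF : HasWirtingerDerivAt F a b z) (h0 : F z ≠ 0) :
    HasWirtingerDerivAt (fun w => (F w)⁻¹) (-a / F z ^ 2) (-b / F z ^ 2) z :=
  ((hasDerivAt_inv h0).comp_hasFDerivAt z hF).congr_fderiv <| by
    ext1 v; simp only [smul_apply, wirtingerCLM_apply, smul_eq_mul]; ring

lemma cpow_const (hF : HasWirtingerDerivAt F a b z) (h0 : F z ∈ slitPlane) (c : ℂ) :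
    HasWirtingerDerivAt (fun w => F w ^ c) (c * F z ^ (c - 1) * a) (c * F z ^ (c - 1) * b) z :=
  ((hasStrictDerivAt_cpow_const (c := c) h0).hasDerivAt.comp_hasFDerivAt z hF).congr_fderiv <| by
    ext1 v; simp only [smul_apply, wirtingerCLM_apply, smul_eq_mul]; ring

end HasWirtingerDerivAt

lemma hasWirtingerDerivAt_id (z : ℂ) : HasWirtingerDerivAt (fun w => w) 1 0 z :=
  (hasFDerivAt_id (𝕜 := ℝ) z).congr_fderiv (by ext1 v; simp)

lemma hasWirtingerDerivAt_conj (z : ℂ) : HasWirtingerDerivAt (fun w => conj w) 0 1 z :=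
  (conjCLE : ℂ →L[ℝ] ℂ).hasFDerivAt.congr_fderiv (by ext1 v; simp)

section ComplexFlow

def complexStream (q z : ℂ) : ℂ := z * (z * conj z) ^ q

/-- `i (conj ∂_z f + ∂_z̄ f)` for `f = complexStream q`, i.e. the perpendicular gradient of `Re f`
(see `perp_fderiv_toE2`). -/
def complexVelocity (q z : ℂ) : ℂ :=
  I * ((1 + conj q) * conj (complexStream q z) + q * complexStream q z) / conj z

variable {q z : ℂ}

lemma hasWirtingerDerivAt_complexStream (hz : z ≠ 0) :
    HasWirtingerDerivAt (complexStream q)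
      ((1 + q) * complexStream q z / z) (q * complexStream q z / conj z) z := by
  have hz' : conj z ≠ 0 := (map_ne_zero _).2 hz
  have hN : z * conj z ≠ 0 := mul_ne_zero hz hz'
  have hslit : z * conj z ∈ slitPlane := by
    rw [mul_conj]; exact ofReal_mem_slitPlane.2 (normSq_pos.2 hz)
  have h := (hasWirtingerDerivAt_id z).mul
    (((hasWirtingerDerivAt_id z).mul (hasWirtingerDerivAt_conj z)).cpow_const hslit q)
  convert h using 1
  · rfl
  all_goals rw [cpow_sub _ _ hN, cpow_one, complexStream]; field_simp; ring

lemma hasWirtingerDerivAt_complexVelocity (hz : z ≠ 0) :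
    HasWirtingerDerivAt (complexVelocity q)
      (I * (q * (1 + q) * complexStream q z + conj (q * (1 + q)) * conj (complexStream q z)) /
        (z * conj z))
      (I * (q * (q - 1) * complexStream q z + conj q * (1 + conj q) * conj (complexStream q z)) /
        conj z ^ 2) z := by
  have hz' : conj z ≠ 0 := (map_ne_zero _).2 hz
  have hF := hasWirtingerDerivAt_complexStream (q := q) hz
  have h := ((((hF.conjugate.const_mul (1 + conj q)).add (hF.const_mul q)).const_mul I).mul
    ((hasWirtingerDerivAt_conj z).inv hz'))
  convert h using 1
  · funext w; simp [complexVelocity, div_eq_mul_inv]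
  all_goals simp only [map_mul, map_div₀, map_add, map_one, conj_conj]; field_simp; ring

lemma im_fderiv_complexVelocity_mul_conj (hz : z ≠ 0) :
    (fderiv ℝ (complexVelocity q) z (complexVelocity q z) * conj z).im =
      (1 + 2 * q.re) * (-2 * q.im) * normSq (complexStream q z) / normSq z := by
  have hz' : conj z ≠ 0 := (map_ne_zero _).2 hz
  set F := complexStream q z
  set X := -(q * (1 + q) * F ^ 2)
  set K := ((1 + q) * (1 + conj q) - q * conj q) * (1 + conj q - q) -
    (1 + q) * (1 + conj q) - q * conj q
  have key : fderiv ℝ (complexVelocity q) z (complexVelocity q z) * conj z =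
      (X + conj X + K * (F * conj F)) / (z * conj z) := by
    rw [(hasWirtingerDerivAt_complexVelocity hz).fderiv_apply]
    simp only [complexVelocity, X, K, map_mul, map_div₀, map_add, map_one, map_neg, map_pow,
      conj_conj, conj_I]
    field_simp
    ring_nf
    simp only [I_sq]
    ring
  have hK : K.im = (1 + 2 * q.re) * (-2 * q.im) := by
    simp only [K, sub_im, mul_im, add_re, add_im, one_re, one_im, conj_re, conj_im, mul_re, sub_re]
    ring
  rw [key, add_conj, mul_conj, mul_conj, div_ofReal_im, add_im, ofReal_im, zero_add, im_mul_ofReal,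
    hK]

lemma norm_complexStream (q : ℂ) (hz : z ≠ 0) :
    ‖complexStream q z‖ = ‖z‖ ^ (1 + 2 * q.re) := by
  have hr : 0 < ‖z‖ := norm_pos_iff.2 hz
  rw [complexStream, norm_mul, mul_conj, normSq_eq_norm_sq,
    norm_cpow_eq_rpow_re_of_pos (by positivity), Real.rpow_add hr, Real.rpow_one,
    ← Real.rpow_natCast_mul hr.le, Nat.cast_ofNat]

end ComplexFlow

abbrev toE2 : ℂ ≃ₗᵢ[ℝ] E2 := Complex.orthonormalBasisOneI.repr

lemma fderiv_apply_toE2 {E : Type*} [NormedAddCommGroup E] [NormedSpace ℝ E]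
    {g : E2 → E} {G : ℂ → E} {z : ℂ} (hg : (fun w => g (toE2 w)) =ᶠ[nhds z] G)
    (hG : DifferentiableAt ℝ G z) (v : ℂ) :
    fderiv ℝ g (toE2 z) (toE2 v) = fderiv ℝ G z v := by
  have hloc : g =ᶠ[nhds (toE2 z)] G ∘ toE2.symm := by
    have ht := toE2.symm.continuous.tendsto' _ _ (toE2.symm_apply_apply z)
    simpa only [Function.comp_def, LinearIsometryEquiv.apply_symm_apply] using hg.comp_tendsto ht
  have hG' : HasFDerivAt G (fderiv ℝ G z) (toE2.symm (toE2 z)) := by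
    rw [toE2.symm_apply_apply]; exact hG.hasFDerivAt
  rw [hloc.fderiv_eq, (hG'.comp (toE2 z) toE2.symm.toContinuousLinearEquiv.hasFDerivAt).fderiv]
  simp

lemma perp_fderiv_toE2 {ψ : E2 → ℝ} {F : ℂ → ℂ} {a b z : ℂ}
    (hψ : (fun w => ψ (toE2 w)) =ᶠ[nhds z] fun w => (F w).re) (hF : HasWirtingerDerivAt F a b z) :
    (WithLp.equiv 2 (Fin 2 → ℝ)).symm
      ![-(fderiv ℝ ψ (toE2 z) (EuclideanSpace.single 1 1)),
        fderiv ℝ ψ (toE2 z) (EuclideanSpace.single 0 1)] =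
      toE2 (I * (conj a + b)) := by
  have hre : HasFDerivAt (fun w => (F w).re) (reCLM.comp (fderiv ℝ F z)) z :=
    reCLM.hasFDerivAt.comp z hF.differentiableAt.hasFDerivAt
  have hD (v : ℂ) : fderiv ℝ ψ (toE2 z) (toE2 v) = (a * v + b * conj v).re := by
    rw [fderiv_apply_toE2 hψ hre.differentiableAt, hre.fderiv]
    simp [hF.fderiv_apply]
  have h1 : (EuclideanSpace.single 0 1 : E2) = toE2 1 := by ext i; fin_cases i <;> simp
  have hI : (EuclideanSpace.single 1 1 : E2) = toE2 I := by ext i; fin_cases i <;> simp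
  rw [h1, hI, hD, hD]
  ext i; fin_cases i <;> simp

lemma perp_toE2 (z : ℂ) : perp (toE2 z) = toE2 (I * z) := by
  ext i; fin_cases i <;> simp [perp]

lemma inner_fderiv_apply_rotFlow {u : E2 → E2} {U : ℂ → ℂ} {z : ℂ}
    (hu : (fun w => u (toE2 w)) =ᶠ[nhds z] fun w => toE2 (U w)) (hU : DifferentiableAt ℝ U z) :
    inner ℝ (fderiv ℝ u (toE2 z) (u (toE2 z))) (rotFlow (toE2 z)) =
      (fderiv ℝ U z (U z) * conj z).im / normSq z := by
  have hcomp : HasFDerivAt (fun w => toE2 (U w)) ((toE2 : ℂ →L[ℝ] E2).comp (fderiv ℝ U z)) z :=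
    toE2.toContinuousLinearEquiv.hasFDerivAt.comp z hU.hasFDerivAt
  have hre (W : ℂ) : (I * z * conj W).re = (W * conj z).im := by
    simp only [mul_re, mul_im, I_re, I_im, conj_re, conj_im]; ring
  rw [hu.eq_of_nhds, fderiv_apply_toE2 hu hcomp.differentiableAt, hcomp.fderiv, rotFlow,
    perp_toE2, inner_smul_right, ContinuousLinearMap.comp_apply, ContinuousLinearEquiv.coe_coe,
    LinearIsometryEquiv.coe_toContinuousLinearEquiv, LinearIsometryEquiv.inner_map_map,
    Complex.inner, hre, LinearIsometryEquiv.norm_map, normSq_eq_norm_sq, div_eq_inv_mul]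

/-- With this exponent `z |z|^{2q} = exp (e^{-iα} log r + iθ)`. -/
def streamExponent (α : ℝ) : ℂ := ((Real.cos α : ℂ) - 1 - Real.sin α * I) / 2

lemma streamExponent_re (α : ℝ) : (streamExponent α).re = (Real.cos α - 1) / 2 := by
  simp [streamExponent, cos_ofReal_re]

lemma streamExponent_im (α : ℝ) : (streamExponent α).im = -Real.sin α / 2 := by
  simp [streamExponent, sin_ofReal_re]

lemma polarArg_toE2 (z : ℂ) : polarArg (toE2 z) = arg z := by
  simp [polarArg, re_add_im]

lemma psiA_toE2 (α : ℝ) {z : ℂ} (hz : z ≠ 0) :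
    psiA α (toE2 z) = (complexStream (streamExponent α) z).re := by
  have hr : 0 < ‖z‖ := norm_pos_iff.2 hz
  have hexp : complexStream (streamExponent α) z =
      exp (Real.cos α * Real.log ‖z‖ + (arg z - Real.sin α * Real.log ‖z‖) * I) := by
    have hlog : log (z * conj z) = 2 * Real.log ‖z‖ := by
      rw [mul_conj, normSq_eq_norm_sq, ← ofReal_log (by positivity), Real.log_pow]; push_cast; ring
    rw [complexStream, cpow_def_of_ne_zero (mul_ne_zero hz ((map_ne_zero _).2 hz)), hlog]
    nth_rewrite 1 [← exp_log hz]
    rw [← exp_add, log, streamExponent]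
    ring_nf
  rw [hexp, exp_re, psiA, polarArg_toE2, LinearIsometryEquiv.norm_map, Real.rpow_def_of_pos hr]
  simp only [add_re, add_im, ofReal_re, ofReal_im, mul_re, mul_im, I_re, I_im, sub_re, sub_im]
  ring_nf

lemma uA_toE2 (α : ℝ) {z : ℂ} (hz : z ≠ 0) :
    uA α (toE2 z) = toE2 (complexVelocity (streamExponent α) z) := by
  have hψ : (fun w => psiA α (toE2 w)) =ᶠ[nhds z]
      fun w => (complexStream (streamExponent α) w).re := by
    filter_upwards [isOpen_ne.mem_nhds hz] with w hw using psiA_toE2 α hw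
  rw [uA, perp_fderiv_toE2 hψ (hasWirtingerDerivAt_complexStream hz)]
  have hz' : conj z ≠ 0 := (map_ne_zero _).2 hz
  congr 1
  simp only [complexVelocity, map_div₀, map_mul, map_add, map_one]
  field_simp

lemma inner_fderiv_uA_rotFlow (α : ℝ) {x : E2} (hx : x ≠ 0) :
    inner ℝ (fderiv ℝ (uA α) x (uA α x)) (rotFlow x) =
      Real.sin (2 * α) / 2 * ‖x‖ ^ (-4 + 2 * Real.cos α) := by
  obtain ⟨z, rfl⟩ := toE2.surjective x
  have hz : z ≠ 0 := by rintro rfl; simp at hx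
  have hr : 0 < ‖z‖ := norm_pos_iff.2 hz
  have hu : (fun w => uA α (toE2 w)) =ᶠ[nhds z]
      fun w => toE2 (complexVelocity (streamExponent α) w) := by
    filter_upwards [isOpen_ne.mem_nhds hz] with w hw using uA_toE2 α hw
  have hpow : ‖z‖ ^ (-4 + 2 * Real.cos α) = (‖z‖ ^ Real.cos α) ^ 2 / ‖z‖ ^ 4 := by
    rw [← Real.rpow_mul_natCast hr.le, ← Real.rpow_natCast _ 4, ← Real.rpow_sub hr]
    ring_nf
  rw [inner_fderiv_apply_rotFlow hu (hasWirtingerDerivAt_complexVelocity hz).differentiableAt,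
    im_fderiv_complexVelocity_mul_conj hz, normSq_eq_norm_sq, normSq_eq_norm_sq,
    norm_complexStream _ hz, LinearIsometryEquiv.norm_map, streamExponent_re, streamExponent_im,
    show 1 + 2 * ((Real.cos α - 1) / 2) = Real.cos α by ring, hpow, Real.sin_two_mul]
  ring

open Module in
lemma setIntegral_one_lt_norm_rpow {E : Type*} [NormedAddCommGroup E] [NormedSpace ℝ E]
    [FiniteDimensional ℝ E] [Nontrivial E] [MeasurableSpace E] [BorelSpace E] (μ : Measure E)
    [μ.IsAddHaarMeasure] {p : ℝ} (hp : p < -(finrank ℝ E : ℝ)) :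
    ∫ x in {x : E | 1 < ‖x‖}, ‖x‖ ^ p ∂μ =
      finrank ℝ E * μ.real (Metric.ball 0 1) / (-p - finrank ℝ E) := by
  have hind : {x : E | 1 < ‖x‖}.indicator (fun x => ‖x‖ ^ p) =
      fun x => (Ioi 1).indicator (fun r : ℝ => r ^ p) ‖x‖ := rfl
  have hradial : ∫ r in Ioi (0 : ℝ), r ^ (finrank ℝ E - 1) • (Ioi 1).indicator (· ^ p) r =
      ∫ r in Ioi (1 : ℝ), r ^ (p + finrank ℝ E - 1) := by
    rw [← integral_indicator measurableSet_Ioi, ← integral_indicator measurableSet_Ioi]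
    congr 1; ext r
    by_cases hr : 1 < r
    · have hr0 : (0 : ℝ) < r := one_pos.trans hr
      simp only [indicator, mem_Ioi, hr, hr0, if_true, smul_eq_mul]
      rw [← Real.rpow_natCast, Nat.cast_sub finrank_pos, ← Real.rpow_add hr0]
      ring_nf
    · simp [indicator, hr]
  rw [← integral_indicator (measurableSet_lt measurable_const measurable_norm), hind,
    integral_fun_norm_addHaar, hradial, integral_Ioi_rpow_of_lt (by linarith) one_pos,
    nsmul_eq_mul, smul_eq_mul, Real.one_rpow, sub_add_cancel, neg_sub_left, div_neg, ← neg_div]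
  ring

theorem stmt12_general (α : ℝ) :
    (∀ x : E2, x ≠ 0 →
      (inner ℝ (fderiv ℝ (uA α) x (uA α x)) (rotFlow x) : ℝ)
        = Real.sin (2 * α) / 2 * ‖x‖ ^ (-4 + 2 * Real.cos α)) ∧
    ∫ x in {x : E2 | 1 < ‖x‖}, (inner ℝ (fderiv ℝ (uA α) x (uA α x)) (rotFlow x) : ℝ)
      = Real.pi * Real.sin (2 * α) / (2 - 2 * Real.cos α) := by
  refine ⟨fun x hx => inner_fderiv_uA_rotFlow α hx, ?_⟩
  rw [setIntegral_congr_fun (measurableSet_lt measurable_const measurable_norm)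
    fun x (hx : 1 < ‖x‖) => inner_fderiv_uA_rotFlow α (norm_pos_iff.1 (one_pos.trans hx)),
    integral_const_mul]
  rcases (Real.cos_le_one α).lt_or_eq with hcos | hcos
  · rw [setIntegral_one_lt_norm_rpow volume
        (by rw [finrank_euclideanSpace_fin]; push_cast; linarith), finrank_euclideanSpace_fin, measureReal_def, EuclideanSpace.volume_ball_fin_two,
      ENNReal.ofReal_one, one_pow, one_mul, ENNReal.toReal_ofReal Real.pi_nonneg]
    have hne : 1 - Real.cos α ≠ 0 := by linarith
    push_cast
    rw [show -(-4 + 2 * Real.cos α) - 2 = 2 * (1 - Real.cos α) by ring]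
    field_simp
  · -- the radial integral diverges, but `sin 2α = 0` and `x / 0 = 0`
    have hsin : Real.sin α = 0 := Real.sin_eq_zero_iff_cos_eq.2 (Or.inl hcos)
    simp [Real.sin_two_mul, hsin, hcos]

/-- `(u_α·∇u_α)·ū = (sin 2α / 2) r^{-4+2 cos α}` pointwise, and
`∫_{ℝ²∖B(0,1)} (u_α·∇u_α)·ū = π sin 2α / (2 - 2 cos α)`. -/
theorem stmt12 (α : ℝ) (hα : 0 < α) :
    (∀ x : E2, x ≠ 0 →
      (inner ℝ (fderiv ℝ (uA α) x (uA α x)) (rotFlow x) : ℝ)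
        = Real.sin (2 * α) / 2 * ‖x‖ ^ (-4 + 2 * Real.cos α)) ∧
    ∫ x in {x : E2 | 1 < ‖x‖}, (inner ℝ (fderiv ℝ (uA α) x (uA α x)) (rotFlow x) : ℝ)
      = Real.pi * Real.sin (2 * α) / (2 - 2 * Real.cos α) :=
  stmt12_general α

end
end
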